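/- Let f(x,y) = (x²y, x⁻¹), defined for x ≠ 0. Let x, y ∈ ℂ with x ≠ 0 and xy ≠ 0, and let k ≥ 1 be a natural number. Then f^[k](x,y) = (x,y) if and only if (xy)^k = 1. In particular, if in addition |xy| < 1, then f^[k](x,y) ≠ (x,y); that is, the ℤ-action on the glued Tate curve space generated by the shift is free over points whose product-of-coordinates value lies in the punctured open unit disc. -/

import Mathlib

/-!
The function `h(x, y) = x * y` is invariant under the shift `f`, and on the fibre `h = q` the
shift acts as `(x, y) ↦ (q * x, q⁻¹ * y)`. Hence `f^[k](x, y) = (q ^ k * x, (q ^ k)⁻¹ * y)`,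
which equals `(x, y)` exactly when `q ^ k = 1`; a root of unity has norm `1`, so none lies in
the punctured unit disc.
-/

namespace TateShift

variable {K : Type*} [Field K]

def shift (p : K × K) : K × K := (p.1 ^ 2 * p.2, p.1⁻¹)

theorem shift_eq {x y : K} (hxy : x * y ≠ 0) : shift (x, y) = (x * y * x, (x * y)⁻¹ * y) := by
  have hy : y ≠ 0 := right_ne_zero_of_mul hxy
  exact Prod.ext (by simp only [shift]; ring) (by simp only [shift]; field_simp)

theorem iterate_shift_eq {x y : K} (hxy : x * y ≠ 0) (n : ℕ) :
    shift^[n] (x, y) = ((x * y) ^ n * x, ((x * y) ^ n)⁻¹ * y) := by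
  induction n with
  | zero => simp
  | succ n ih =>
    have h_invariant : (x * y) ^ n * x * (((x * y) ^ n)⁻¹ * y) = x * y := by
      field_simp
    rw [Function.iterate_succ_apply', ih, shift_eq (h_invariant.symm ▸ hxy), h_invariant]
    exact Prod.ext (by ring) (by ring)

theorem iterate_shift_eq_self_iff {x y : K} (hxy : x * y ≠ 0) (n : ℕ) :
    shift^[n] (x, y) = (x, y) ↔ (x * y) ^ n = 1 := by
  rw [iterate_shift_eq hxy, Prod.mk.injEq, mul_eq_right₀ (left_ne_zero_of_mul hxy)]
  constructor
  · exact And.left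
  · intro hq
    simp [hq]

end TateShift

theorem tate_shift_free_general (x y : ℂ) (hxy : x * y ≠ 0) (k : ℕ) (hk : 1 ≤ k) :
    ((fun p : ℂ × ℂ => (p.1 ^ 2 * p.2, p.1⁻¹))^[k] (x, y) = (x, y) ↔ (x * y) ^ k = 1) ∧
      (‖x * y‖ < 1 →
        (fun p : ℂ × ℂ => (p.1 ^ 2 * p.2, p.1⁻¹))^[k] (x, y) ≠ (x, y)) := by
  have h_fixed := TateShift.iterate_shift_eq_self_iff hxy k
  refine ⟨h_fixed, fun h_disc h_eq => h_disc.ne ?_⟩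
  exact Complex.norm_eq_one_of_pow_eq_one (h_fixed.mp h_eq) (by omega)

/-- For `f(x,y) = (x²y, x⁻¹)` (defined where `x ≠ 0`), `x ≠ 0`, `xy ≠ 0`
and `k ≥ 1`, one has `f^[k](x,y) = (x,y)` iff `(xy)^k = 1`; in particular if moreover
`|xy| < 1` then `f^[k](x,y) ≠ (x,y)` (freeness of the shift action over the punctured
unit disc). -/
theorem tate_shift_free (x y : ℂ) (hx : x ≠ 0) (hxy : x * y ≠ 0) (k : ℕ) (hk : 1 ≤ k) :
    ((fun p : ℂ × ℂ => (p.1 ^ 2 * p.2, p.1⁻¹))^[k] (x, y) = (x, y) ↔ (x * y) ^ k = 1) ∧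
      (‖x * y‖ < 1 →
        (fun p : ℂ × ℂ => (p.1 ^ 2 * p.2, p.1⁻¹))^[k] (x, y) ≠ (x, y)) :=
  tate_shift_free_general x y hxy k hk
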